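/- For every x⁰ ∈ ℝ^{2n+4} with all coordinates strictly positive, the stoichiometric compatibility class P = (x⁰ + column space of Γ) ∩ ℝ^{2n+4}_{≥0} contains exactly one steady state η, and all coordinates of η are strictly positive. -/

import Mathlib

open Matrix Finset

noncomputable section

/-- The `m`-th (1-based) standard basis vector of `ℝ^(2n+4)`. -/
def E (n : ℕ) (m : ℕ) : Fin (2*n+4) → ℝ := fun j => if (j : ℕ) + 1 = m then 1 else 0

/-- The value of a vector `x ∈ ℝ^(2n+4)` at the (1-based) math index `m`. -/
def X (n : ℕ) (x : Fin (2*n+4) → ℝ) (m : ℕ) : ℝ :=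
  if h : m - 1 < 2*n+4 then x ⟨m - 1, h⟩ else 0

/-- The stoichiometric matrix `Γ` of the processive `n`-site phosphorylation network;
columns are indexed 1-based as in the paper. -/
def Gamma (n : ℕ) : Matrix (Fin (2*n+4)) (Fin (2*n+2)) ℝ :=
  Matrix.of fun r c0 =>
    (let c := (c0 : ℕ) + 1
     if c = 1 then E n 5 - E n 1 - E n 3
     else if c ≤ n then E n (2*(c-1)+5) - E n (2*(c-1)+3)
     else if c = n+1 then E n 1 + E n 4 - E n (2*n+3)
     else if c = n+2 then E n (2*n+4) - E n 2 - E n 4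
     else if c ≤ 2*n+1 then E n (2*n+4-2*(c-(n+2))) - E n (2*n+6-2*(c-(n+2)))
     else E n 2 + E n 3 - E n 6) r

/-- The mass-action reaction rate function `R : ℝ^(2n+4) → ℝ^(2n+2)` of the processive
`n`-site phosphorylation network (coordinates indexed 1-based). -/
def Rvec (n : ℕ) (k l : ℕ → ℝ) (x : Fin (2*n+4) → ℝ) : Fin (2*n+2) → ℝ := fun a0 =>
  let a := (a0 : ℕ) + 1
  if a = 1 then k 1 * X n x 1 * X n x 3 - k 2 * X n x 5
  else if a ≤ n then
    k (2*(a-1)+1) * X n x (2*(a-1)+3) - k (2*(a-1)+2) * X n x (2*(a-1)+5)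
  else if a = n+1 then k (2*n+1) * X n x (2*n+3)
  else if a = n+2 then l (2*n+1) * X n x 2 * X n x 4 - l (2*n) * X n x (2*n+4)
  else if a ≤ 2*n+1 then
    l (2*(n-(a-(n+2)))+1) * X n x (2*(n-(a-(n+2)))+6)
      - l (2*(n-(a-(n+2)))) * X n x (2*(n-(a-(n+2)))+4)
  else l 1 * X n x 6

/-!
The reactions form two linear chains, `x₁ + x₃ ⇌ x₅ ⇌ x₇ ⇌ ⋯ ⇌ x_{2n+3} → x₁ + x₄` for the kinase
and `x₂ + x₄ ⇌ x_{2n+4} ⇌ ⋯ ⇌ x₆ → x₂ + x₃` for the phosphatase, closed into one cycle; every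
species is produced by exactly one reaction and consumed by exactly one, so `Γ R = 0` exactly when
all reactions carry the same flux `v`. Solving each chain back from its irreversible step makes the
complexes, and the mass-action products `x₁x₃` and `x₂x₄`, fixed positive multiples of `v`.
The image of `Γ` is cut out by the three conservation laws (total kinase, phosphatase and
substrate). With the enzyme totals `K` and `F` fixed, the free enzymes are `K - A v` and `F - B v`,
and the substrate total becomes a strictly increasing function of `v` that runs from `0` to `+∞`
on the admissible interval; hence exactly one flux fits the substrate total of `x⁰`.
-/

lemma X_succ (n : ℕ) (x : Fin (2*n+4) → ℝ) (r : Fin (2*n+4)) : X n x ((r : ℕ) + 1) = x r := by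
  rw [X, dif_pos (by omega)]
  rfl

lemma X_zero (n m : ℕ) : X n 0 m = 0 := by
  unfold X
  split_ifs <;> rfl

lemma eq_of_X_eq {n : ℕ} {x y : Fin (2*n+4) → ℝ}
    (h : ∀ m, 1 ≤ m → m ≤ 2*n + 4 → X n x m = X n y m) : x = y := by
  funext r
  rw [← X_succ n x r, ← X_succ n y r, h _ (by omega) (by omega)]

lemma X_sub (n : ℕ) (x y : Fin (2*n+4) → ℝ) (m : ℕ) : X n (x - y) m = X n x m - X n y m := by
  unfold X
  split_ifs <;> simp

lemma species_cases {n m : ℕ} (h1 : 1 ≤ m) (h2 : m ≤ 2*n + 4) :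
    m = 1 ∨ m = 2 ∨ m = 3 ∨ m = 4 ∨ (∃ i ∈ Icc 1 n, m = 2*i + 3) ∨
      ∃ j ∈ Icc 1 n, m = 2*j + 4 := by
  obtain h | h | h | h | h | h : m = 1 ∨ m = 2 ∨ m = 3 ∨ m = 4 ∨ (m % 2 = 1 ∧ 5 ≤ m) ∨
      (m % 2 = 0 ∧ 6 ≤ m) := by omega
  iterate 4 simp only [h, true_or, or_true]
  · refine .inr <| .inr <| .inr <| .inr <| .inl ⟨(m - 3) / 2, ?_, by omega⟩
    exact mem_Icc.mpr ⟨by omega, by omega⟩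
  · refine .inr <| .inr <| .inr <| .inr <| .inr ⟨(m - 4) / 2, ?_, by omega⟩
    exact mem_Icc.mpr ⟨by omega, by omega⟩

lemma X_nonneg {n : ℕ} {x : Fin (2*n+4) → ℝ} (hx : ∀ i, 0 ≤ x i) (m : ℕ) : 0 ≤ X n x m := by
  unfold X
  split_ifs
  exacts [hx _, le_rfl]

lemma X_pos {n : ℕ} {x : Fin (2*n+4) → ℝ} (hx : ∀ i, 0 < x i) {m : ℕ} (h1 : 1 ≤ m)
    (h2 : m ≤ 2*n + 4) : 0 < X n x m := by
  rw [X, dif_pos (by omega)]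
  exact hx _

/-- Reaction coordinates with 1-based indices, like `X`; the value is `0` outside `1, …, 2n+2`. -/
def W (n : ℕ) (R : Fin (2*n+2) → ℝ) (a : ℕ) : ℝ :=
  if h : 1 ≤ a ∧ a - 1 < 2*n+2 then R ⟨a - 1, h.2⟩ else 0

/-- Species `m` is produced by reaction `a` alone and consumed by reaction `b` alone. -/
def InOut (n m a b : ℕ) : Prop :=
  (m = 1 ∧ a = n + 1 ∧ b = 1) ∨ (m = 2 ∧ a = 2*n + 2 ∧ b = n + 2) ∨
    (m = 3 ∧ a = 2*n + 2 ∧ b = 1) ∨ (m = 4 ∧ a = n + 1 ∧ b = n + 2) ∨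
    (1 ≤ a ∧ a ≤ n ∧ m = 2*a + 3 ∧ b = a + 1) ∨
    (n + 2 ≤ a ∧ a ≤ 2*n + 1 ∧ m + 2*a = 4*n + 8 ∧ b = a + 1)

lemma Gamma_apply_of_inOut {n : ℕ} (hn : 1 ≤ n) {r : Fin (2*n+4)} {a b : ℕ}
    (h : InOut n ((r : ℕ) + 1) a b) (c : Fin (2*n+2)) :
    Gamma n r c = (if (c : ℕ) + 1 = a then 1 else 0) - (if (c : ℕ) + 1 = b then 1 else 0) := by
  have := c.isLt
  simp only [Gamma, of_apply]
  rcases h with h | h | h | h | h | h <;>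
  split_ifs <;> simp only [E, Pi.add_apply, Pi.sub_apply] <;> split_ifs <;>
    first | (exfalso; omega) | norm_num

lemma exists_inOut {n m : ℕ} (h1 : 1 ≤ m) (h2 : m ≤ 2*n + 4) : ∃ a b, InOut n m a b := by
  rcases species_cases h1 h2 with rfl | rfl | rfl | rfl | ⟨i, hi, rfl⟩ | ⟨j, hj, rfl⟩
  · exact ⟨n + 1, 1, by unfold InOut; omega⟩
  · exact ⟨2*n + 2, n + 2, by unfold InOut; omega⟩
  · exact ⟨2*n + 2, 1, by unfold InOut; omega⟩
  · exact ⟨n + 1, n + 2, by unfold InOut; omega⟩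
  · exact ⟨i, i + 1, by simp only [mem_Icc] at hi; unfold InOut; omega⟩
  · exact ⟨2*n + 2 - j, 2*n + 3 - j, by simp only [mem_Icc] at hj; unfold InOut; omega⟩

lemma sum_ite_mul_eq_W (n : ℕ) (R : Fin (2*n+2) → ℝ) (a : ℕ) :
    ∑ c : Fin (2*n+2), (if (c : ℕ) + 1 = a then 1 else 0) * R c = W n R a := by
  rw [W]
  split_ifs with h
  · rw [Finset.sum_eq_single ⟨a - 1, h.2⟩ (fun c _ hc => by
      rw [if_neg (fun hca => hc (Fin.ext (by simp only; omega))), zero_mul])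
      (by simp), if_pos (by simp only; omega), one_mul]
  · exact Finset.sum_eq_zero fun c _ => by rw [if_neg (by omega), zero_mul]

lemma X_mulVec_Gamma {n : ℕ} (hn : 1 ≤ n) (R : Fin (2*n+2) → ℝ) {m a b : ℕ} (h : InOut n m a b) :
    X n (Gamma n *ᵥ R) m = W n R a - W n R b := by
  have hm : m - 1 < 2*n + 4 := by unfold InOut at h; omega
  have hm1 : m - 1 + 1 = m := by unfold InOut at h; omega
  rw [X, dif_pos hm, mulVec, dotProduct, ← sum_ite_mul_eq_W, ← sum_ite_mul_eq_W,
    ← Finset.sum_sub_distrib]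
  refine Finset.sum_congr rfl fun c _ => ?_
  rw [Gamma_apply_of_inOut hn (by simpa only [hm1] using h), sub_mul]

theorem mulVec_Gamma_eq_zero_iff {n : ℕ} (hn : 1 ≤ n) (R : Fin (2*n+2) → ℝ) :
    Gamma n *ᵥ R = 0 ↔ ∃ v, ∀ a, 1 ≤ a → a ≤ 2*n + 2 → W n R a = v := by
  constructor
  · intro h
    have hstep : ∀ a, 1 ≤ a → a ≤ 2*n + 1 → W n R (a + 1) = W n R a := by
      intro a h1 h2
      obtain ⟨m, hm⟩ : ∃ m, InOut n m a (a + 1) := by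
        obtain h | h | h : a ≤ n ∨ a = n + 1 ∨ n + 2 ≤ a := by omega
        · exact ⟨2*a + 3, by unfold InOut; omega⟩
        · exact ⟨4, by unfold InOut; omega⟩
        · exact ⟨4*n + 8 - 2*a, by unfold InOut; omega⟩
      have := X_mulVec_Gamma hn R hm
      rw [h, X_zero] at this
      linarith
    refine ⟨W n R 1, fun a h1 => ?_⟩
    induction a, h1 using Nat.le_induction with
    | base => exact fun _ => rfl
    | succ a ha ih => exact fun h2 => (hstep a ha (by omega)).trans (ih (by omega))
  · rintro ⟨v, hv⟩
    refine eq_of_X_eq fun m h1 h2 => ?_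
    obtain ⟨a, b, hab⟩ := exists_inOut h1 h2
    have hbounds : 1 ≤ a ∧ a ≤ 2*n + 2 ∧ 1 ≤ b ∧ b ≤ 2*n + 2 := by unfold InOut at hab; omega
    rw [X_mulVec_Gamma hn R hab, hv a hbounds.1 hbounds.2.1, hv b hbounds.2.2.1 hbounds.2.2.2,
      sub_self, X_zero]

def totalKinase (n : ℕ) (x : Fin (2*n+4) → ℝ) : ℝ :=
  X n x 1 + ∑ i ∈ Icc 1 n, X n x (2*i + 3)

def totalPhosphatase (n : ℕ) (x : Fin (2*n+4) → ℝ) : ℝ :=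
  X n x 2 + ∑ j ∈ Icc 1 n, X n x (2*j + 4)

def totalSubstrate (n : ℕ) (x : Fin (2*n+4) → ℝ) : ℝ :=
  X n x 3 + X n x 4 + ∑ i ∈ Icc 1 n, X n x (2*i + 3) + ∑ j ∈ Icc 1 n, X n x (2*j + 4)

lemma totals_pos {n : ℕ} {x : Fin (2*n+4) → ℝ} (hx : ∀ i, 0 < x i) :
    0 < totalKinase n x ∧ 0 < totalPhosphatase n x ∧ 0 < totalSubstrate n x := by
  have hodd : 0 ≤ ∑ i ∈ Icc 1 n, X n x (2*i + 3) :=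
    sum_nonneg fun _ _ => X_nonneg (hx · |>.le) _
  have heven : 0 ≤ ∑ j ∈ Icc 1 n, X n x (2*j + 4) :=
    sum_nonneg fun _ _ => X_nonneg (hx · |>.le) _
  have := X_pos hx (m := 1) le_rfl (by omega)
  have := X_pos hx (m := 2) (by omega) (by omega)
  have := X_pos hx (m := 3) (by omega) (by omega)
  have := X_pos hx (m := 4) (by omega) (by omega)
  refine ⟨?_, ?_, ?_⟩ <;> simp only [totalKinase, totalPhosphatase, totalSubstrate] <;> linarith

lemma sum_X_mulVec_Gamma_kinase {n : ℕ} (hn : 1 ≤ n) (u : Fin (2*n+2) → ℝ) :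
    ∑ i ∈ Icc 1 n, X n (Gamma n *ᵥ u) (2*i + 3) = W n u 1 - W n u (n + 1) := by
  rw [Finset.sum_congr rfl fun i hi =>
      X_mulVec_Gamma hn u (a := i) (b := i + 1) (by simp only [mem_Icc] at hi; unfold InOut; omega),
    ← neg_sub, ← Finset.sum_Icc_sub hn (fun i => W n u i), ← Finset.sum_neg_distrib]
  simp only [neg_sub]

lemma sum_X_mulVec_Gamma_phosphatase {n : ℕ} (hn : 1 ≤ n) (u : Fin (2*n+2) → ℝ) :
    ∑ j ∈ Icc 1 n, X n (Gamma n *ᵥ u) (2*j + 4) = W n u (n + 2) - W n u (2*n + 2) := by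
  have h := Finset.sum_Icc_sub hn (fun j => W n u (2*n + 3 - j))
  rw [show 2*n + 3 - (n + 1) = n + 2 by omega, show 2*n + 3 - 1 = 2*n + 2 by omega] at h
  rw [← h]
  refine Finset.sum_congr rfl fun j hj => ?_
  simp only [mem_Icc] at hj
  rw [X_mulVec_Gamma hn u (a := 2*n + 2 - j) (b := 2*n + 3 - j) (by unfold InOut; omega),
    show 2*n + 3 - (j + 1) = 2*n + 2 - j by omega]

lemma conservation_laws {n : ℕ} (hn : 1 ≤ n) (u : Fin (2*n+2) → ℝ) :
    totalKinase n (Gamma n *ᵥ u) = 0 ∧ totalPhosphatase n (Gamma n *ᵥ u) = 0 ∧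
      totalSubstrate n (Gamma n *ᵥ u) = 0 := by
  simp only [totalKinase, totalPhosphatase, totalSubstrate, sum_X_mulVec_Gamma_kinase hn,
    sum_X_mulVec_Gamma_phosphatase hn,
    X_mulVec_Gamma hn u (m := 1) (a := n + 1) (b := 1) (by unfold InOut; omega),
    X_mulVec_Gamma hn u (m := 2) (a := 2*n + 2) (b := n + 2) (by unfold InOut; omega),
    X_mulVec_Gamma hn u (m := 3) (a := 2*n + 2) (b := 1) (by unfold InOut; omega),
    X_mulVec_Gamma hn u (m := 4) (a := n + 1) (b := n + 2) (by unfold InOut; omega)]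
  refine ⟨?_, ?_, ?_⟩ <;> ring

lemma exists_mulVec_Gamma_eq {n : ℕ} (hn : 1 ≤ n) (y : Fin (2*n+4) → ℝ)
    (hK : totalKinase n y = 0) (hF : totalPhosphatase n y = 0) (hS : totalSubstrate n y = 0) :
    ∃ u, Gamma n *ᵥ u = y := by
  -- `u` sums the balances `W a - W (a + 1) = y` around the cycle, starting from `0` at the
  -- last reaction.
  set u : Fin (2*n+2) → ℝ := fun c => if (c : ℕ) ≤ n
    then -X n y 3 - ∑ i ∈ Icc 1 (c : ℕ), X n y (2*i + 3)
    else ∑ j ∈ Icc 1 (2*n + 1 - c), X n y (2*j + 4)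
  have hWK : ∀ i ≤ n, W n u (i + 1) = -X n y 3 - ∑ i ∈ Icc 1 i, X n y (2*i + 3) := fun i hi => by
    rw [W, dif_pos (by omega)]
    simp only [u, Nat.add_sub_cancel, if_pos hi]
  have hWF : ∀ j ≤ n, W n u (2*n + 2 - j) = ∑ j ∈ Icc 1 j, X n y (2*j + 4) := fun j hj => by
    rw [W, dif_pos (by omega)]
    simp only [u, if_neg (show ¬(2*n + 2 - j - 1 ≤ n) by omega),
      show 2*n + 1 - (2*n + 2 - j - 1) = j by omega]
  have hW1 : W n u 1 = -X n y 3 := by simpa using hWK 0 (Nat.zero_le n)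
  have hWlast : W n u (2*n + 2) = 0 := by simpa using hWF 0 (Nat.zero_le n)
  have hWmid : W n u (n + 2) = ∑ j ∈ Icc 1 n, X n y (2*j + 4) := by
    rw [← hWF n le_rfl]
    congr 1
    omega
  refine ⟨u, eq_of_X_eq fun m h1 h2 => ?_⟩
  obtain ⟨a, b, hab⟩ := exists_inOut h1 h2
  rw [X_mulVec_Gamma hn u hab]
  simp only [totalKinase, totalPhosphatase, totalSubstrate] at hK hF hS
  rcases hab with ⟨rfl, rfl, rfl⟩ | ⟨rfl, rfl, rfl⟩ | ⟨rfl, rfl, rfl⟩ | ⟨rfl, rfl, rfl⟩ |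
    ⟨ha1, ha2, rfl, rfl⟩ | ⟨ha1, ha2, hm, rfl⟩
  · rw [hWK n le_rfl, hW1]
    linarith
  · rw [hWlast, hWmid]
    linarith
  · rw [hWlast, hW1]
    ring
  · rw [hWK n le_rfl, hWmid]
    linarith
  · obtain ⟨i, rfl⟩ : ∃ i, a = i + 1 := ⟨a - 1, by omega⟩
    rw [hWK i (by omega), hWK (i + 1) ha2, Finset.sum_Icc_succ_top (by omega)]
    ring
  · obtain ⟨j, rfl⟩ : ∃ j, a = 2*n + 2 - (j + 1) := ⟨2*n + 1 - a, by omega⟩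
    rw [hWF (j + 1) (by omega), show 2*n + 2 - (j + 1) + 1 = 2*n + 2 - j by omega,
      hWF j (by omega), Finset.sum_Icc_succ_top (by omega), show m = 2*(j + 1) + 4 by omega]
    ring

theorem sub_mem_range_Gamma_iff {n : ℕ} (hn : 1 ≤ n) (x y : Fin (2*n+4) → ℝ) :
    x - y ∈ LinearMap.range (mulVecLin (Gamma n)) ↔ totalKinase n x = totalKinase n y ∧
      totalPhosphatase n x = totalPhosphatase n y ∧ totalSubstrate n x = totalSubstrate n y := by
  have hK : totalKinase n (x - y) = totalKinase n x - totalKinase n y := by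
    simp only [totalKinase, X_sub, sum_sub_distrib]
    ring
  have hF : totalPhosphatase n (x - y) = totalPhosphatase n x - totalPhosphatase n y := by
    simp only [totalPhosphatase, X_sub, sum_sub_distrib]
    ring
  have hS : totalSubstrate n (x - y) = totalSubstrate n x - totalSubstrate n y := by
    simp only [totalSubstrate, X_sub, sum_sub_distrib]
    ring
  simp only [LinearMap.mem_range, mulVecLin_apply, ← sub_eq_zero (a := totalKinase n x),
    ← sub_eq_zero (a := totalPhosphatase n x), ← sub_eq_zero (a := totalSubstrate n x),
    ← hK, ← hF, ← hS]
  constructor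
  · rintro ⟨u, hu⟩
    exact hu ▸ conservation_laws hn u
  · rintro ⟨h1, h2, h3⟩
    exact exists_mulVec_Gamma_eq hn _ h1 h2 h3

def chainCoeff (p q : ℕ → ℝ) : ℕ → ℝ
  | 0 => 0
  | j + 1 => (1 + q j * chainCoeff p q j) / p j

theorem chain_flux_iff {p q z : ℕ → ℝ} {N : ℕ} (hp : ∀ j < N, p j ≠ 0) (hz : z 0 = 0) (v : ℝ) :
    (∀ j < N, p j * z (j + 1) - q j * z j = v) ↔ ∀ j ≤ N, z j = chainCoeff p q j * v := by
  induction N with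
  | zero => simpa [chainCoeff] using hz
  | succ N ih =>
    have hpN := hp N (by omega)
    rw [Nat.forall_lt_succ_right, ih fun j hj => hp j (by omega)]
    constructor
    · rintro ⟨hle, hN⟩ j hj
      rcases Nat.lt_or_eq_of_le hj with hj | rfl
      · exact hle j (by omega)
      · rw [hle N le_rfl] at hN
        rw [chainCoeff, div_mul_eq_mul_div, eq_div_iff hpN]
        linear_combination hN
    · intro h
      refine ⟨fun j hj => h j (by omega), ?_⟩
      rw [h (N + 1) le_rfl, h N (by omega), chainCoeff]
      field_simp
      ring

lemma chainCoeff_pos {p q : ℕ → ℝ} {N : ℕ} (hp : ∀ j < N, 0 < p j)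
    (hq : ∀ j, 1 ≤ j → j < N → 0 ≤ q j) {j : ℕ} (hj1 : 1 ≤ j) (hjN : j ≤ N) :
    0 < chainCoeff p q j := by
  induction j, hj1 using Nat.le_induction with
  | base => simpa [chainCoeff] using hp 0 (by omega)
  | succ j hj ih =>
    have := hq j hj (by omega)
    have := hp j (by omega)
    have := ih (by omega)
    rw [chainCoeff]
    positivity

/-- The kinase chain counted back from its irreversible step `x_{2n+3} → x₁ + x₄`: `0` at `t = 0`,
the complexes `x_{2n+3}, …, x₅` at `t = 1, …, n`, and `x₁x₃` at `t = n + 1`. -/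
def kinaseChain (n : ℕ) (x : Fin (2*n+4) → ℝ) (t : ℕ) : ℝ :=
  if t = 0 then 0 else if t ≤ n then X n x (2*(n + 1 - t) + 3) else X n x 1 * X n x 3

def phosphataseChain (n : ℕ) (x : Fin (2*n+4) → ℝ) (j : ℕ) : ℝ :=
  if j = 0 then 0 else if j ≤ n then X n x (2*j + 4) else X n x 2 * X n x 4

lemma W_Rvec_kinase {n : ℕ} (hn : 1 ≤ n) (k l : ℕ → ℝ) (x : Fin (2*n+4) → ℝ) {t : ℕ}
    (ht : t ≤ n) :
    W n (Rvec n k l x) (n + 1 - t)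
      = k (2*(n - t) + 1) * kinaseChain n x (t + 1) - k (2*(n - t) + 2) * kinaseChain n x t := by
  rw [W, dif_pos (by omega)]
  simp only [Rvec, kinaseChain]
  split_ifs <;> (try simp only [mul_zero, sub_zero, mul_assoc]) <;> (try (exfalso; omega)) <;>
    congr 2 <;> first | omega | (congr 1; omega)

lemma W_Rvec_phosphatase {n : ℕ} (hn : 1 ≤ n) (k l : ℕ → ℝ) (x : Fin (2*n+4) → ℝ) {j : ℕ}
    (hj : j ≤ n) :
    W n (Rvec n k l x) (2*n + 2 - j)
      = l (2*j + 1) * phosphataseChain n x (j + 1) - l (2*j) * phosphataseChain n x j := by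
  rw [W, dif_pos (by omega)]
  simp only [Rvec, phosphataseChain]
  split_ifs <;> (try simp only [mul_zero, sub_zero, mul_assoc]) <;> (try (exfalso; omega)) <;>
    congr 2 <;> first | omega | (congr 1; omega)

def kinaseCoeff (n : ℕ) (k : ℕ → ℝ) : ℕ → ℝ :=
  chainCoeff (fun t => k (2*(n - t) + 1)) (fun t => k (2*(n - t) + 2))

def phosphataseCoeff (l : ℕ → ℝ) : ℕ → ℝ :=
  chainCoeff (fun j => l (2*j + 1)) (fun j => l (2*j))

lemma kinaseCoeff_pos {n : ℕ} {k : ℕ → ℝ} (hk : ∀ i, 1 ≤ i → i ≤ 2*n+1 → 0 < k i) {t : ℕ}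
    (h1 : 1 ≤ t) (h2 : t ≤ n + 1) : 0 < kinaseCoeff n k t :=
  chainCoeff_pos (N := n + 1) (fun _ _ => hk _ (by omega) (by omega))
    (fun _ _ _ => (hk _ (by omega) (by omega)).le) h1 h2

lemma phosphataseCoeff_pos {n : ℕ} {l : ℕ → ℝ} (hl : ∀ i, 1 ≤ i → i ≤ 2*n+1 → 0 < l i)
    {j : ℕ} (h1 : 1 ≤ j) (h2 : j ≤ n + 1) : 0 < phosphataseCoeff l j :=
  chainCoeff_pos (N := n + 1) (fun _ _ => hl _ (by omega) (by omega))
    (fun _ _ _ => (hl _ (by omega) (by omega)).le) h1 h2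

lemma forall_W_Rvec_eq_iff {n : ℕ} (hn : 1 ≤ n) (k l : ℕ → ℝ) (x : Fin (2*n+4) → ℝ) (v : ℝ) :
    (∀ a, 1 ≤ a → a ≤ 2*n + 2 → W n (Rvec n k l x) a = v) ↔
      (∀ t < n + 1, k (2*(n - t) + 1) * kinaseChain n x (t + 1)
        - k (2*(n - t) + 2) * kinaseChain n x t = v) ∧
      (∀ j < n + 1, l (2*j + 1) * phosphataseChain n x (j + 1)
        - l (2*j) * phosphataseChain n x j = v) := by
  constructor
  · intro h
    exact ⟨fun t ht => (W_Rvec_kinase hn k l x (by omega)).symm.trans (h _ (by omega) (by omega)),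
      fun j hj => (W_Rvec_phosphatase hn k l x (by omega)).symm.trans (h _ (by omega) (by omega))⟩
  · rintro ⟨hK, hF⟩ a h1 h2
    rcases le_or_gt a (n + 1) with ha | ha
    · have h := W_Rvec_kinase hn k l x (t := n + 1 - a) (by omega)
      rw [show n + 1 - (n + 1 - a) = a by omega] at h
      exact h.trans (hK _ (by omega))
    · have h := W_Rvec_phosphatase hn k l x (j := 2*n + 2 - a) (by omega)
      rw [show 2*n + 2 - (2*n + 2 - a) = a by omega] at h
      exact h.trans (hF _ (by omega))

theorem mulVec_Rvec_eq_zero_iff_chains {n : ℕ} (hn : 1 ≤ n) {k l : ℕ → ℝ}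
    (hk : ∀ i, 1 ≤ i → i ≤ 2*n+1 → 0 < k i) (hl : ∀ i, 1 ≤ i → i ≤ 2*n+1 → 0 < l i)
    (x : Fin (2*n+4) → ℝ) :
    Gamma n *ᵥ Rvec n k l x = 0 ↔ ∃ v, (∀ t ≤ n + 1, kinaseChain n x t = kinaseCoeff n k t * v) ∧
      ∀ j ≤ n + 1, phosphataseChain n x j = phosphataseCoeff l j * v := by
  rw [mulVec_Gamma_eq_zero_iff hn]
  refine exists_congr fun v => ?_
  rw [forall_W_Rvec_eq_iff hn, kinaseCoeff, phosphataseCoeff,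
    ← chain_flux_iff (p := fun t => k (2*(n - t) + 1)) (q := fun t => k (2*(n - t) + 2))
      (fun _ _ => (hk _ (by omega) (by omega)).ne') (by simp [kinaseChain]),
    ← chain_flux_iff (p := fun j => l (2*j + 1)) (q := fun j => l (2*j))
      (fun _ _ => (hl _ (by omega) (by omega)).ne') (by simp [phosphataseChain])]

def IsSteadyAtFlux (n : ℕ) (k l : ℕ → ℝ) (x : Fin (2*n+4) → ℝ) (v : ℝ) : Prop :=
  X n x 1 * X n x 3 = kinaseCoeff n k (n + 1) * v ∧
    X n x 2 * X n x 4 = phosphataseCoeff l (n + 1) * v ∧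
    (∀ i ∈ Icc 1 n, X n x (2*i + 3) = kinaseCoeff n k (n + 1 - i) * v) ∧
    ∀ j ∈ Icc 1 n, X n x (2*j + 4) = phosphataseCoeff l j * v

lemma forall_kinaseChain_eq_iff (n : ℕ) (k : ℕ → ℝ) (x : Fin (2*n+4) → ℝ) (v : ℝ) :
    (∀ t ≤ n + 1, kinaseChain n x t = kinaseCoeff n k t * v) ↔
      X n x 1 * X n x 3 = kinaseCoeff n k (n + 1) * v ∧
        ∀ i ∈ Icc 1 n, X n x (2*i + 3) = kinaseCoeff n k (n + 1 - i) * v := by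
  constructor
  · intro h
    refine ⟨by simpa [kinaseChain] using h (n + 1) le_rfl, fun i hi => ?_⟩
    simp only [mem_Icc] at hi
    have h' := h (n + 1 - i) (by omega)
    rwa [kinaseChain, if_neg (by omega), if_pos (by omega),
      show n + 1 - (n + 1 - i) = i by omega] at h'
  · rintro ⟨h13, h⟩ t ht
    rw [kinaseChain]
    split_ifs with h0 hle
    · simp [h0, kinaseCoeff, chainCoeff]
    · rw [h (n + 1 - t) (mem_Icc.mpr ⟨by omega, by omega⟩), show n + 1 - (n + 1 - t) = t by omega]
    · rw [h13, show t = n + 1 by omega]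

lemma forall_phosphataseChain_eq_iff (n : ℕ) (l : ℕ → ℝ) (x : Fin (2*n+4) → ℝ) (v : ℝ) :
    (∀ j ≤ n + 1, phosphataseChain n x j = phosphataseCoeff l j * v) ↔
      X n x 2 * X n x 4 = phosphataseCoeff l (n + 1) * v ∧
        ∀ j ∈ Icc 1 n, X n x (2*j + 4) = phosphataseCoeff l j * v := by
  constructor
  · intro h
    refine ⟨by simpa [phosphataseChain] using h (n + 1) le_rfl, fun j hj => ?_⟩
    simp only [mem_Icc] at hj
    have h' := h j (by omega)
    rwa [phosphataseChain, if_neg (by omega), if_pos (by omega)] at h'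
  · rintro ⟨h24, h⟩ j hj
    rw [phosphataseChain]
    split_ifs with h0 hle
    · simp [h0, phosphataseCoeff, chainCoeff]
    · exact h j (mem_Icc.mpr ⟨by omega, hle⟩)
    · rw [h24, show j = n + 1 by omega]

theorem mulVec_Rvec_eq_zero_iff {n : ℕ} (hn : 1 ≤ n) {k l : ℕ → ℝ}
    (hk : ∀ i, 1 ≤ i → i ≤ 2*n+1 → 0 < k i) (hl : ∀ i, 1 ≤ i → i ≤ 2*n+1 → 0 < l i)
    (x : Fin (2*n+4) → ℝ) :
    Gamma n *ᵥ Rvec n k l x = 0 ↔ ∃ v, IsSteadyAtFlux n k l x v := by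
  simp only [mulVec_Rvec_eq_zero_iff_chains hn hk hl, forall_kinaseChain_eq_iff,
    forall_phosphataseChain_eq_iff, IsSteadyAtFlux]
  tauto

/-- At flux `v` the free enzymes are `K - A v` and `F - B v`, so the first two terms are the free
substrates `x₃` and `x₄`. -/
def substrateProfile (c d A B K F v : ℝ) : ℝ :=
  c * v / (K - A * v) + d * v / (F - B * v) + (A + B) * v

lemma strictMonoOn_substrateProfile {c d A B K F : ℝ} (hc : 0 ≤ c) (hd : 0 ≤ d) (hA : 0 < A)
    (hB : 0 < B) :
    StrictMonoOn (substrateProfile c d A B K F) {v | 0 ≤ v ∧ A * v < K ∧ B * v < F} := by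
  rintro a ⟨ha0, haK, haF⟩ b ⟨hb0, hbK, hbF⟩ hab
  have h1 : c * a / (K - A * a) ≤ c * b / (K - A * b) :=
    div_le_div₀ (mul_nonneg hc hb0) (by gcongr) (by linarith) (by nlinarith)
  have h2 : d * a / (F - B * a) ≤ d * b / (F - B * b) :=
    div_le_div₀ (mul_nonneg hd hb0) (by gcongr) (by linarith) (by nlinarith)
  have h3 : (A + B) * a < (A + B) * b := by gcongr
  unfold substrateProfile
  linarith

lemma exists_div_sub_mul_eq {c A K S : ℝ} (hc : 0 < c) (hA : 0 ≤ A) (hK : 0 < K) (hS : 0 < S) :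
    ∃ w, 0 < w ∧ A * w < K ∧ c * w / (K - A * w) = S := by
  have hden : 0 < c + S * A := by positivity
  refine ⟨S * K / (c + S * A), by positivity, ?_, ?_⟩
  · rw [mul_div_assoc', div_lt_iff₀ hden]
    nlinarith [mul_pos hc hK]
  · have hKw : K - A * (S * K / (c + S * A)) = c * K / (c + S * A) := by
      field_simp
      ring
    rw [hKw]
    field_simp

lemma exists_substrateProfile_eq {c d A B K F S : ℝ} (hc : 0 < c) (hd : 0 < d) (hA : 0 < A)
    (hB : 0 < B) (hK : 0 < K) (hF : 0 < F) (hS : 0 < S) :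
    ∃ v, 0 < v ∧ A * v < K ∧ B * v < F ∧ substrateProfile c d A B K F v = S := by
  -- at the smaller of the two points where a saturating term alone equals `S`, the sum is `≥ S`
  obtain ⟨w, hw0, hwK, hwF, hSw⟩ :
      ∃ w, 0 ≤ w ∧ A * w < K ∧ B * w < F ∧ S ≤ substrateProfile c d A B K F w := by
    obtain ⟨w₁, hw₁, hw₁K, hc₁⟩ := exists_div_sub_mul_eq hc hA.le hK hS
    obtain ⟨w₂, hw₂, hw₂F, hd₂⟩ := exists_div_sub_mul_eq hd hB.le hF hS
    rcases le_total w₁ w₂ with h | h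
    · have hw₁F : B * w₁ < F := by nlinarith
      refine ⟨w₁, hw₁.le, hw₁K, hw₁F, ?_⟩
      have : 0 ≤ d * w₁ / (F - B * w₁) := div_nonneg (by positivity) (by linarith)
      unfold substrateProfile
      nlinarith
    · have hw₂K : A * w₂ < K := by nlinarith
      refine ⟨w₂, hw₂.le, hw₂K, hw₂F, ?_⟩
      have : 0 ≤ c * w₂ / (K - A * w₂) := div_nonneg (by positivity) (by linarith)
      unfold substrateProfile
      nlinarith
  have hcont : ContinuousOn (substrateProfile c d A B K F) (Set.Icc 0 w) := by
    refine ((ContinuousOn.div (by fun_prop) (by fun_prop) fun v hv => ?_).add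
      (ContinuousOn.div (by fun_prop) (by fun_prop) fun v hv => ?_)).add (by fun_prop)
    · nlinarith [hv.2]
    · nlinarith [hv.2]
  obtain ⟨v, ⟨hv0, hvw⟩, hv⟩ := intermediate_value_Icc hw0 hcont
    ⟨by simpa [substrateProfile] using hS.le, hSw⟩
  refine ⟨v, lt_of_le_of_ne hv0 ?_, by nlinarith, by nlinarith, hv⟩
  rintro rfl
  simp [substrateProfile] at hv
  linarith

def sequesteredKinase (n : ℕ) (k : ℕ → ℝ) : ℝ := ∑ i ∈ Icc 1 n, kinaseCoeff n k (n + 1 - i)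

def sequesteredPhosphatase (n : ℕ) (l : ℕ → ℝ) : ℝ := ∑ j ∈ Icc 1 n, phosphataseCoeff l j

lemma sequesteredKinase_pos {n : ℕ} (hn : 1 ≤ n) {k : ℕ → ℝ}
    (hk : ∀ i, 1 ≤ i → i ≤ 2*n+1 → 0 < k i) : 0 < sequesteredKinase n k :=
  sum_pos (fun i hi => kinaseCoeff_pos hk (by simp at hi; omega) (by omega))
    ⟨1, mem_Icc.mpr ⟨le_rfl, hn⟩⟩

lemma sequesteredPhosphatase_pos {n : ℕ} (hn : 1 ≤ n) {l : ℕ → ℝ}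
    (hl : ∀ i, 1 ≤ i → i ≤ 2*n+1 → 0 < l i) : 0 < sequesteredPhosphatase n l :=
  sum_pos (fun j hj => phosphataseCoeff_pos hl (by simp at hj; omega) (by simp at hj; omega))
    ⟨1, mem_Icc.mpr ⟨le_rfl, hn⟩⟩

namespace IsSteadyAtFlux

variable {n : ℕ} {k l : ℕ → ℝ} {x : Fin (2*n+4) → ℝ} {v : ℝ}

lemma totalKinase_eq (h : IsSteadyAtFlux n k l x v) :
    totalKinase n x = X n x 1 + sequesteredKinase n k * v := by
  rw [totalKinase, sequesteredKinase, sum_mul, sum_congr rfl h.2.2.1]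

lemma totalPhosphatase_eq (h : IsSteadyAtFlux n k l x v) :
    totalPhosphatase n x = X n x 2 + sequesteredPhosphatase n l * v := by
  rw [totalPhosphatase, sequesteredPhosphatase, sum_mul, sum_congr rfl h.2.2.2]

lemma totalSubstrate_eq (h : IsSteadyAtFlux n k l x v) :
    totalSubstrate n x = X n x 3 + X n x 4
      + (sequesteredKinase n k + sequesteredPhosphatase n l) * v := by
  rw [totalSubstrate, sequesteredKinase, sequesteredPhosphatase, sum_congr rfl h.2.2.1,
    sum_congr rfl h.2.2.2, ← sum_mul, ← sum_mul]
  ring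

end IsSteadyAtFlux

def steadyState (n : ℕ) (k l : ℕ → ℝ) (K F v : ℝ) : Fin (2*n+4) → ℝ := fun r =>
  if (r : ℕ) + 1 = 1 then K - sequesteredKinase n k * v
  else if (r : ℕ) + 1 = 2 then F - sequesteredPhosphatase n l * v
  else if (r : ℕ) + 1 = 3 then kinaseCoeff n k (n + 1) * v / (K - sequesteredKinase n k * v)
  else if (r : ℕ) + 1 = 4 then
    phosphataseCoeff l (n + 1) * v / (F - sequesteredPhosphatase n l * v)
  else if ((r : ℕ) + 1) % 2 = 1 then kinaseCoeff n k (n + 1 - ((r : ℕ) - 2) / 2) * v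
  else phosphataseCoeff l (((r : ℕ) - 3) / 2) * v

section steadyState

variable {n : ℕ} {k l : ℕ → ℝ} {K F v : ℝ}

lemma X_steadyState {m : ℕ} (h1 : 1 ≤ m) (h2 : m ≤ 2*n + 4) :
    X n (steadyState n k l K F v) m = steadyState n k l K F v ⟨m - 1, by omega⟩ := by
  rw [X, dif_pos]

lemma X_steadyState_one : X n (steadyState n k l K F v) 1 = K - sequesteredKinase n k * v := by
  simp [X_steadyState, steadyState]

lemma X_steadyState_two :
    X n (steadyState n k l K F v) 2 = F - sequesteredPhosphatase n l * v := by
  simp [X_steadyState, steadyState]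

lemma X_steadyState_three : X n (steadyState n k l K F v) 3
    = kinaseCoeff n k (n + 1) * v / (K - sequesteredKinase n k * v) := by
  simp [X_steadyState, steadyState]

lemma X_steadyState_four : X n (steadyState n k l K F v) 4
    = phosphataseCoeff l (n + 1) * v / (F - sequesteredPhosphatase n l * v) := by
  simp [X_steadyState, steadyState]

lemma X_steadyState_kinase {i : ℕ} (hi : i ∈ Icc 1 n) :
    X n (steadyState n k l K F v) (2*i + 3) = kinaseCoeff n k (n + 1 - i) * v := by
  simp only [mem_Icc] at hi
  rw [X_steadyState (by omega) (by omega)]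
  dsimp only [steadyState]
  rw [if_neg (by omega), if_neg (by omega), if_neg (by omega), if_neg (by omega), if_pos (by omega),
    show (2*i + 3 - 1 - 2) / 2 = i by omega]

lemma X_steadyState_phosphatase {j : ℕ} (hj : j ∈ Icc 1 n) :
    X n (steadyState n k l K F v) (2*j + 4) = phosphataseCoeff l j * v := by
  simp only [mem_Icc] at hj
  rw [X_steadyState (by omega) (by omega)]
  dsimp only [steadyState]
  rw [if_neg (by omega), if_neg (by omega), if_neg (by omega), if_neg (by omega), if_neg (by omega),
    show (2*j + 4 - 1 - 3) / 2 = j by omega]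

lemma isSteadyAtFlux_steadyState (hK : K - sequesteredKinase n k * v ≠ 0)
    (hF : F - sequesteredPhosphatase n l * v ≠ 0) :
    IsSteadyAtFlux n k l (steadyState n k l K F v) v := by
  refine ⟨?_, ?_, fun i hi => X_steadyState_kinase hi, fun j hj => X_steadyState_phosphatase hj⟩
  · rw [X_steadyState_one, X_steadyState_three]
    field_simp
  · rw [X_steadyState_two, X_steadyState_four]
    field_simp

lemma steadyState_pos (hk : ∀ i, 1 ≤ i → i ≤ 2*n+1 → 0 < k i)
    (hl : ∀ i, 1 ≤ i → i ≤ 2*n+1 → 0 < l i) (hv : 0 < v) (hK : sequesteredKinase n k * v < K)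
    (hF : sequesteredPhosphatase n l * v < F) (r : Fin (2*n+4)) :
    0 < steadyState n k l K F v r := by
  have hc := kinaseCoeff_pos hk (t := n + 1) (by omega) le_rfl
  have hd := phosphataseCoeff_pos hl (j := n + 1) (by omega) le_rfl
  have hK' : 0 < K - sequesteredKinase n k * v := by linarith
  have hF' : 0 < F - sequesteredPhosphatase n l * v := by linarith
  rw [← X_succ n (steadyState n k l K F v) r]
  rcases species_cases (n := n) (m := (r : ℕ) + 1) (by omega) (by omega) with
    h | h | h | h | ⟨i, hi, h⟩ | ⟨j, hj, h⟩ <;> rw [h]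
  · rwa [X_steadyState_one]
  · rwa [X_steadyState_two]
  · rw [X_steadyState_three]
    positivity
  · rw [X_steadyState_four]
    positivity
  · have := kinaseCoeff_pos hk (t := n + 1 - i) (by simp at hi; omega) (by omega)
    rw [X_steadyState_kinase hi]
    positivity
  · have := phosphataseCoeff_pos hl (j := j) (by simp at hj; omega) (by simp at hj; omega)
    rw [X_steadyState_phosphatase hj]
    positivity

lemma totals_steadyState (hK : K - sequesteredKinase n k * v ≠ 0)
    (hF : F - sequesteredPhosphatase n l * v ≠ 0) :
    totalKinase n (steadyState n k l K F v) = K ∧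
      totalPhosphatase n (steadyState n k l K F v) = F ∧
      totalSubstrate n (steadyState n k l K F v) =
        substrateProfile (kinaseCoeff n k (n + 1)) (phosphataseCoeff l (n + 1))
          (sequesteredKinase n k) (sequesteredPhosphatase n l) K F v := by
  have h := isSteadyAtFlux_steadyState hK hF
  refine ⟨?_, ?_, ?_⟩
  · rw [h.totalKinase_eq, X_steadyState_one]
    ring
  · rw [h.totalPhosphatase_eq, X_steadyState_two]
    ring
  · rw [h.totalSubstrate_eq, X_steadyState_three, X_steadyState_four, substrateProfile]

end steadyState

namespace IsSteadyAtFlux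

variable {n : ℕ} {k l : ℕ → ℝ} {x : Fin (2*n+4) → ℝ} {v : ℝ}

lemma eq_steadyState (h : IsSteadyAtFlux n k l x v) (h1 : X n x 1 ≠ 0) (h2 : X n x 2 ≠ 0) :
    x = steadyState n k l (totalKinase n x) (totalPhosphatase n x) v := by
  refine eq_of_X_eq fun m hm1 hm2 => ?_
  rcases species_cases hm1 hm2 with rfl | rfl | rfl | rfl | ⟨i, hi, rfl⟩ | ⟨j, hj, rfl⟩
  · rw [X_steadyState_one, h.totalKinase_eq, add_sub_cancel_right]
  · rw [X_steadyState_two, h.totalPhosphatase_eq, add_sub_cancel_right]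
  · rw [X_steadyState_three, h.totalKinase_eq, add_sub_cancel_right, ← h.1,
      mul_div_cancel_left₀ _ h1]
  · rw [X_steadyState_four, h.totalPhosphatase_eq, add_sub_cancel_right, ← h.2.1,
      mul_div_cancel_left₀ _ h2]
  · rw [X_steadyState_kinase hi, h.2.2.1 i hi]
  · rw [X_steadyState_phosphatase hj, h.2.2.2 j hj]

lemma flux_nonneg_and_free_enzymes_pos (hk : ∀ i, 1 ≤ i → i ≤ 2*n+1 → 0 < k i)
    (hl : ∀ i, 1 ≤ i → i ≤ 2*n+1 → 0 < l i) (h : IsSteadyAtFlux n k l x v) (hx : ∀ i, 0 ≤ x i)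
    (hK : 0 < totalKinase n x) (hF : 0 < totalPhosphatase n x) :
    0 ≤ v ∧ 0 < X n x 1 ∧ 0 < X n x 2 := by
  have hc := kinaseCoeff_pos hk (t := n + 1) (by omega) le_rfl
  have hd := phosphataseCoeff_pos hl (j := n + 1) (by omega) le_rfl
  refine ⟨(mul_nonneg_iff_of_pos_left hc).mp (h.1 ▸ mul_nonneg (X_nonneg hx 1) (X_nonneg hx 3)),
    (X_nonneg hx 1).lt_of_ne fun h0 => ?_, (X_nonneg hx 2).lt_of_ne fun h0 => ?_⟩
  · have hv : v = 0 := by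
      have h13 := h.1
      rw [← h0, zero_mul] at h13
      exact (mul_eq_zero.mp h13.symm).resolve_left hc.ne'
    rw [h.totalKinase_eq, ← h0, hv] at hK
    simp at hK
  · have hv : v = 0 := by
      have h24 := h.2.1
      rw [← h0, zero_mul] at h24
      exact (mul_eq_zero.mp h24.symm).resolve_left hd.ne'
    rw [h.totalPhosphatase_eq, ← h0, hv] at hF
    simp at hF

end IsSteadyAtFlux

/-- Each stoichiometric compatibility class of the processive `n`-site system contains
exactly one steady state, and this steady state is positive. -/
theorem existence_uniqueness_of_steady_states (n : ℕ) (hn : 1 ≤ n) (k l : ℕ → ℝ)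
    (hk : ∀ i, 1 ≤ i → i ≤ 2*n+1 → 0 < k i)
    (hl : ∀ i, 1 ≤ i → i ≤ 2*n+1 → 0 < l i)
    (x0 : Fin (2*n+4) → ℝ) (hx0 : ∀ i, 0 < x0 i) :
    ∃ η : Fin (2*n+4) → ℝ,
      ((∀ i, 0 ≤ η i) ∧ η - x0 ∈ LinearMap.range (Matrix.mulVecLin (Gamma n)) ∧
        (Gamma n).mulVec (Rvec n k l η) = 0) ∧
      (∀ i, 0 < η i) ∧
      (∀ η' : Fin (2*n+4) → ℝ,
        ((∀ i, 0 ≤ η' i) ∧ η' - x0 ∈ LinearMap.range (Matrix.mulVecLin (Gamma n)) ∧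
          (Gamma n).mulVec (Rvec n k l η') = 0) → η' = η) := by
  obtain ⟨hK, hF, hS⟩ := totals_pos hx0
  have hc := kinaseCoeff_pos hk (t := n + 1) (by omega) le_rfl
  have hd := phosphataseCoeff_pos hl (j := n + 1) (by omega) le_rfl
  have hA := sequesteredKinase_pos hn hk
  have hB := sequesteredPhosphatase_pos hn hl
  obtain ⟨v, hv, hvK, hvF, hvS⟩ := exists_substrateProfile_eq hc hd hA hB hK hF hS
  have hfreeK := (sub_pos.2 hvK).ne'
  have hfreeF := (sub_pos.2 hvF).ne'
  obtain ⟨hηK, hηF, hηS⟩ := totals_steadyState (k := k) (l := l) hfreeK hfreeF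
  have hpos := steadyState_pos hk hl hv hvK hvF
  refine ⟨_, ⟨fun r => (hpos r).le, (sub_mem_range_Gamma_iff hn _ x0).2 ⟨hηK, hηF, hηS.trans hvS⟩,
    (mulVec_Rvec_eq_zero_iff hn hk hl _).2 ⟨v, isSteadyAtFlux_steadyState hfreeK hfreeF⟩⟩,
    hpos, ?_⟩
  rintro η' ⟨hη'0, hrange, hsteady⟩
  obtain ⟨hK', hF', hS'⟩ := (sub_mem_range_Gamma_iff hn η' x0).1 hrange
  obtain ⟨v', hv'⟩ := (mulVec_Rvec_eq_zero_iff hn hk hl η').1 hsteady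
  obtain ⟨hv'0, hX1, hX2⟩ := hv'.flux_nonneg_and_free_enzymes_pos hk hl hη'0 (hK' ▸ hK) (hF' ▸ hF)
  have heq := hv'.eq_steadyState hX1.ne' hX2.ne'
  rw [hK', hF'] at heq
  rw [heq, X_steadyState_one] at hX1
  rw [heq, X_steadyState_two] at hX2
  have hg := (totals_steadyState (k := k) (l := l) hX1.ne' hX2.ne').2.2
  rw [← heq, hS', ← hvS] at hg
  rw [heq, (strictMonoOn_substrateProfile hc.le hd.le hA hB).injOn
    ⟨hv'0, by linarith, by linarith⟩ ⟨hv.le, hvK, hvF⟩ hg.symm]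

end
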